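/- Let A be a unital C*-algebra, let ω be a faithful state on A, and let a ∈ A be self-adjoint. Then (ω(a^{2p}))^{1/(2p)} converges to ‖a‖ as p → ∞ (p ranging over the positive integers); here each ω(a^{2p}) is a nonnegative real number since a^{2p} is positive. Equivalently, for every positive element b ≥ 0 of A, (ω(b^p))^{1/p} → ‖b‖, which is the paper's formula ‖a‖ = lim_{p→∞} ω(|a|^p)^{1/p} since |a|^{2p} = a^{2p}. -/

import Mathlib

open scoped ComplexOrder

open Filter Topology

/-! For any state, `ω(b^p) ≤ ‖b^p‖ ≤ ‖b‖^p`. Conversely, given `0 ≤ s < ‖b‖`, functional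
calculus with a ramp function supported on `[s, ‖b‖]` and equal to `1` at `‖b‖ ∈ σ(b)` gives a
nonzero self-adjoint `c` with `s^p c² ≤ b^p` for all `p`. Faithfulness makes `ω(c²) > 0`, hence
`ω(b^p)^{1/p} ≥ s ω(c²)^{1/p} → s`. The self-adjoint case is the positive one applied to `a²`,
as `‖a²‖ = ‖a‖²`. -/

theorem tendsto_rpow_one_div_of_le_pow {u : ℕ → ℝ} {r : ℝ} (hu : ∀ p, 0 ≤ u p)
    (hur : ∀ p, u p ≤ r ^ p) (hru : ∀ s, 0 ≤ s → s < r → ∃ C > 0, ∀ p, s ^ p * C ≤ u p) :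
    Tendsto (fun p : ℕ => u p ^ ((1 : ℝ) / p)) atTop (𝓝 r) := by
  have hr : 0 ≤ r := by simpa using (hu 1).trans (hur 1)
  refine tendsto_order.2 ⟨fun x hx => ?_, fun x hx => ?_⟩
  · rcases lt_or_ge x 0 with hx₀ | hx₀
    · exact .of_forall fun p => hx₀.trans_le (Real.rpow_nonneg (hu p) _)
    obtain ⟨s, hxs, hsr⟩ := exists_between hx
    have hs₀ : 0 ≤ s := hx₀.trans hxs.le
    obtain ⟨C, hC, hCu⟩ := hru s hs₀ hsr
    have hlim : Tendsto (fun p : ℕ => s * C ^ ((1 : ℝ) / p)) atTop (𝓝 s) := by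
      simpa [Function.comp_def] using ((Real.continuousAt_const_rpow hC.ne').tendsto.comp
        tendsto_one_div_atTop_nhds_zero_nat).const_mul s
    filter_upwards [hlim.eventually (eventually_gt_nhds hxs),
      eventually_ne_atTop 0] with p hxp hp
    calc x < s * C ^ ((1 : ℝ) / p) := hxp
      _ = (s ^ p * C) ^ ((1 : ℝ) / p) := by
        rw [Real.mul_rpow (by positivity) hC.le, one_div,
          Real.pow_rpow_inv_natCast hs₀ hp]
      _ ≤ u p ^ ((1 : ℝ) / p) := by gcongr; exact hCu p
  · filter_upwards [eventually_ne_atTop 0] with p hp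
    calc u p ^ ((1 : ℝ) / p) ≤ (r ^ p) ^ ((1 : ℝ) / p) := by gcongr; exacts [hu p, hur p]
      _ = r := by rw [one_div, Real.pow_rpow_inv_natCast hr hp]
      _ < x := hx

section CStarAlgebra

variable {A : Type*} [CStarAlgebra A] {ω : A →ₗ[ℂ] ℂ}

theorem re_map_mul_self_pos (hω : ∀ x : A, 0 ≤ ω (star x * x))
    (hω_faithful : ∀ x : A, ω (star x * x) = 0 → x = 0) {c : A} (hc : IsSelfAdjoint c)
    (hc₀ : c ≠ 0) : 0 < (ω (c * c)).re := by
  have h := (Complex.lt_def.1 <| (hω c).lt_of_ne' (mt (hω_faithful c) hc₀)).1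
  rwa [hc.star_eq] at h

variable [PartialOrder A] [StarOrderedRing A]

theorem CStarAlgebra.exists_smul_mul_self_le_pow {b : A} (hb : 0 ≤ b) {s : ℝ} (hs₀ : 0 ≤ s)
    (hs : s < ‖b‖) : ∃ c : A, IsSelfAdjoint c ∧ c ≠ 0 ∧ ∀ p : ℕ, s ^ p • (c * c) ≤ b ^ p := by
  have : Nontrivial A := nontrivial_of_ne b 0 fun h => by simp [h] at hs; linarith
  set f : ℝ → ℝ := fun t => max (t - s) 0 / (‖b‖ - s)
  refine ⟨cfc f b, cfc_predicate f b, fun h => ?_, fun p => ?_⟩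
  · have hmem : f ‖b‖ ∈ spectrum ℝ (cfc f b) :=
      cfc_map_spectrum f b ▸ ⟨‖b‖, CStarAlgebra.norm_mem_spectrum_of_nonneg hb, rfl⟩
    have hf : f ‖b‖ = 1 := by
      simp only [f]; rw [max_eq_left (by linarith), div_self (by linarith)]
    simp [h, hf] at hmem
  rw [← cfc_mul f f b, ← cfc_smul (s ^ p) _ b, ← cfc_pow_id (R := ℝ) b p]
  refine cfc_mono fun t ht => ?_
  have ht₀ : 0 ≤ t := spectrum_nonneg_of_nonneg hb ht
  have htb : t ≤ ‖b‖ := by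
    simpa [abs_of_nonneg ht₀] using spectrum.norm_le_norm_of_mem ht
  simp only [smul_eq_mul, f]
  rcases le_or_gt t s with hts | hst
  · simp [max_eq_right (sub_nonpos.2 hts), _root_.pow_nonneg ht₀]
  · have hf₀ : 0 ≤ max (t - s) 0 / (‖b‖ - s) := by positivity
    have hf₁ : max (t - s) 0 / (‖b‖ - s) ≤ 1 := by
      rw [max_eq_left (by linarith), div_le_one (by linarith)]; linarith
    calc s ^ p * (max (t - s) 0 / (‖b‖ - s) * (max (t - s) 0 / (‖b‖ - s)))
        ≤ s ^ p * 1 := by gcongr; exact mul_le_one₀ hf₁ hf₀ hf₁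
      _ ≤ t ^ p := by rw [mul_one]; exact pow_le_pow_left₀ hs₀ hst.le p

theorem map_nonneg_of_map_star_mul_self_nonneg (hω : ∀ x : A, 0 ≤ ω (star x * x)) {a : A}
    (ha : 0 ≤ a) : 0 ≤ ω a := by
  simpa [CFC.sqrt_nonneg (a := a) |>.isSelfAdjoint.star_eq, CFC.sqrt_mul_sqrt_self a ha]
    using hω (CFC.sqrt a)

theorem re_map_nonneg (hω : ∀ x : A, 0 ≤ ω (star x * x)) {a : A} (ha : 0 ≤ a) :
    0 ≤ (ω a).re :=
  Complex.re_le_re (map_nonneg_of_map_star_mul_self_nonneg hω ha)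

theorem re_map_mono (hω : ∀ x : A, 0 ≤ ω (star x * x)) {a b : A} (hab : a ≤ b) :
    (ω a).re ≤ (ω b).re :=
  Complex.re_le_re <| (PositiveLinearMap.mk₀ ω fun _ =>
    map_nonneg_of_map_star_mul_self_nonneg hω).monotone' hab

theorem re_map_le_norm (hω : ∀ x : A, 0 ≤ ω (star x * x)) (hω₁ : ω 1 = 1) {a : A}
    (ha : IsSelfAdjoint a) : (ω a).re ≤ ‖a‖ := by
  simpa [Algebra.algebraMap_eq_smul_one, ← Complex.coe_smul, hω₁] using
    re_map_mono hω ha.le_algebraMap_norm_self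

theorem re_map_pow_le_norm_pow (hω : ∀ x : A, 0 ≤ ω (star x * x)) (hω₁ : ω 1 = 1) {a : A}
    (ha : IsSelfAdjoint a) (p : ℕ) : (ω (a ^ p)).re ≤ ‖a‖ ^ p := by
  have : Nontrivial A := nontrivial_of_ne 1 0 fun h => by simp [h] at hω₁
  exact (re_map_le_norm hω hω₁ (ha.pow p)).trans (norm_pow_le a p)

theorem tendsto_re_map_pow_rpow_one_div (hω₁ : ω 1 = 1) (hω : ∀ x : A, 0 ≤ ω (star x * x))
    (hω_faithful : ∀ x : A, ω (star x * x) = 0 → x = 0) {b : A} (hb : 0 ≤ b) :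
    Tendsto (fun p : ℕ => (ω (b ^ p)).re ^ ((1 : ℝ) / p)) atTop (𝓝 ‖b‖) := by
  refine tendsto_rpow_one_div_of_le_pow
    (fun p => re_map_nonneg hω (CStarAlgebra.pow_nonneg hb p))
    (re_map_pow_le_norm_pow hω hω₁ hb.isSelfAdjoint) fun s hs₀ hs => ?_
  obtain ⟨c, hc, hc₀, hcb⟩ := CStarAlgebra.exists_smul_mul_self_le_pow hb hs₀ hs
  refine ⟨_, re_map_mul_self_pos hω hω_faithful hc hc₀, fun p => ?_⟩
  simpa only [ω.map_smul_of_tower, Complex.smul_re, smul_eq_mul] using re_map_mono hω (hcb p)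

end CStarAlgebra

/-- Let `A` be a unital C*-algebra, `ω` a faithful state on `A` and `a ∈ A`
self-adjoint. Then `(ω (a^(2p)))^(1/(2p)) → ‖a‖` as `p → ∞` (each `ω (a^(2p))` is a nonnegative
real, recorded via its real part). Equivalently, for every positive element `b ≥ 0`,
`(ω (b^p))^(1/p) → ‖b‖`. -/
theorem norm_eq_lim_state_of_powers
    {A : Type*} [CStarAlgebra A] [PartialOrder A] [StarOrderedRing A]
    (ω : A →ₗ[ℂ] ℂ) (hω_unital : ω 1 = 1)
    (hω_pos : ∀ x : A, 0 ≤ ω (star x * x))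
    (hω_faithful : ∀ x : A, ω (star x * x) = 0 → x = 0)
    (a : A) (ha : IsSelfAdjoint a) :
    Filter.Tendsto (fun p : ℕ => (ω (a ^ (2 * p))).re ^ ((1 : ℝ) / (2 * p)))
      Filter.atTop (nhds ‖a‖) ∧
    ∀ b : A, 0 ≤ b →
      Filter.Tendsto (fun p : ℕ => (ω (b ^ p)).re ^ ((1 : ℝ) / p))
        Filter.atTop (nhds ‖b‖) := by
  have hpos := fun b (hb : 0 ≤ b) =>
    tendsto_re_map_pow_rpow_one_div hω_unital hω_pos hω_faithful hb
  refine ⟨?_, hpos⟩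
  have hsq : ‖a ^ 2‖ = ‖a‖ ^ 2 := by simpa using ha.norm_pow_two_pow 1
  have hlim := (hpos _ ha.sq_nonneg).rpow_const (p := 1 / 2) (Or.inr (by norm_num))
  rw [hsq, ← Real.sqrt_eq_rpow, Real.sqrt_sq (norm_nonneg a)] at hlim
  refine hlim.congr fun p => ?_
  rw [← Real.rpow_mul (re_map_nonneg hω_pos (CStarAlgebra.pow_nonneg ha.sq_nonneg p)),
    ← pow_mul]
  congr 1
  ring
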